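/- (Proposition 5, restricted form) Consider the restricted 2×2 game in which the seller chooses s ∈ {1, r} and the buyer chooses NV or V with fixed criterion θ, with δ1 = δ(θ,α_1), δr = δ(θ,α_r). Assume U_1 < p_r ≤ U_r, 0 < C_1 < C_r < p_r, C_T > 0, C_T < (1 − δ1)·(p_r − U_1), and δ1·(p_r − C_1) < δr·(p_r − C_r). Let φ := ((1 − δr)·(U_r − p_r) + C_T)/((1 − δ1)·(p_r − U_1) + (1 − δr)·(U_r − p_r)) and ψ := (C_r − C_1)/((1 − δ1)·(p_r − C_1) − (1 − δr)·(p_r − C_r)). Then φ, ψ ∈ (0,1), and the mixed profile in which the seller delivers M_1 with probability φ and M_r with probability 1 − φ, while the buyer verifies with probability ψ and does not verify with probability 1 − ψ, is a mixed strategy Nash equilibrium of the 2×2 game: each player's expected payoff is the same for both of their pure strategies, so neither player can strictly increase their expected payoff by any unilateral change of mixed strategy. -/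
import Mathlib


/-- The acceptance probability `δ(θ, α)` under verification with test data size `T` and
acceptance criterion `θ`. -/
noncomputable def delta (T θ : ℕ) (α : ℝ) : ℝ :=
  ∑ i ∈ Finset.Icc θ T, (T.choose i : ℝ) * α ^ i * (1 - α) ^ (T - i)

lemma delta_le_one' (T θ : ℕ) (α : ℝ) (h0 : 0 ≤ α) (h1 : α ≤ 1) : delta T θ α ≤ 1 := by
  have key : ∑ i ∈ Finset.range (T + 1), (T.choose i : ℝ) * α ^ i * (1 - α) ^ (T - i) = 1 :=
    calc ∑ i ∈ Finset.range (T + 1), (T.choose i : ℝ) * α ^ i * (1 - α) ^ (T - i)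
        = (α + (1 - α)) ^ T := by
          rw [add_pow]; exact Finset.sum_congr rfl (fun i _ => by ring)
      _ = 1 := by norm_num
  calc delta T θ α ≤ ∑ i ∈ Finset.range (T + 1), (T.choose i : ℝ) * α ^ i * (1 - α) ^ (T - i) := by
        apply Finset.sum_le_sum_of_subset_of_nonneg
        · intro i hi
          simp only [Finset.mem_Icc] at hi
          simp [Nat.lt_succ_iff, hi.2]
        · intro i _ _
          have : (0:ℝ) ≤ 1 - α := by linarith
          positivity
    _ = 1 := key

/-- Proposition 5 (restricted form): under economical and effective verification, the
profile in which the seller delivers `M_1` with probability `φ` and `M_r` with probability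
`1 − φ`, while the buyer verifies with probability `ψ` and plays NV with probability
`1 − ψ`, is a mixed strategy Nash equilibrium of the restricted 2×2 game: `φ, ψ ∈ (0,1)`,
each player is indifferent between their two pure strategies, and no unilateral change of
mixed strategy strictly increases a player's expected payoff. -/
theorem prop5 (T θ : ℕ) (hT : 1 ≤ T) (hθ : θ ≤ T + 1)
    (α1 αr : ℝ) (hα1nn : 0 ≤ α1) (hαle : α1 ≤ αr) (hαr1 : αr ≤ 1)
    (U1 Ur C1 Cr pr CT δ1 δr φ ψ : ℝ)
    (hδ1 : δ1 = delta T θ α1) (hδr : δr = delta T θ αr)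
    (hU1 : U1 < pr) (hpU : pr ≤ Ur)
    (hC1 : 0 < C1) (hC : C1 < Cr) (hCpr : Cr < pr) (hCT : 0 < CT)
    (heconomical : CT < (1 - δ1) * (pr - U1))
    (heffective : δ1 * (pr - C1) < δr * (pr - Cr))
    (hφ : φ = ((1 - δr) * (Ur - pr) + CT) /
      ((1 - δ1) * (pr - U1) + (1 - δr) * (Ur - pr)))
    (hψ : ψ = (Cr - C1) / ((1 - δ1) * (pr - C1) - (1 - δr) * (pr - Cr))) :
    (0 < φ ∧ φ < 1) ∧ (0 < ψ ∧ ψ < 1) ∧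
    -- seller indifference between delivering M_1 and M_r against the buyer's mixture
    ((1 - ψ) * (pr - C1) + ψ * (δ1 * (pr - C1))
      = (1 - ψ) * (pr - Cr) + ψ * (δr * (pr - Cr))) ∧
    -- buyer indifference between V and NV against the seller's mixture
    (φ * (δ1 * (U1 - pr)) + (1 - φ) * (δr * (Ur - pr)) - CT
      = φ * (U1 - pr) + (1 - φ) * (Ur - pr)) ∧
    -- no unilateral mixed deviation improves the seller's expected payoff
    (∀ φ' : ℝ, 0 ≤ φ' → φ' ≤ 1 →
      φ' * ((1 - ψ) * (pr - C1) + ψ * (δ1 * (pr - C1)))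
          + (1 - φ') * ((1 - ψ) * (pr - Cr) + ψ * (δr * (pr - Cr))) ≤
        φ * ((1 - ψ) * (pr - C1) + ψ * (δ1 * (pr - C1)))
          + (1 - φ) * ((1 - ψ) * (pr - Cr) + ψ * (δr * (pr - Cr)))) ∧
    -- no unilateral mixed deviation improves the buyer's expected payoff
    (∀ ψ' : ℝ, 0 ≤ ψ' → ψ' ≤ 1 →
      ψ' * (φ * (δ1 * (U1 - pr)) + (1 - φ) * (δr * (Ur - pr)) - CT)
          + (1 - ψ') * (φ * (U1 - pr) + (1 - φ) * (Ur - pr)) ≤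
        ψ * (φ * (δ1 * (U1 - pr)) + (1 - φ) * (δr * (Ur - pr)) - CT)
          + (1 - ψ) * (φ * (U1 - pr) + (1 - φ) * (Ur - pr))) := by
  have hδr1 : δr ≤ 1 := hδr ▸ delta_le_one' T θ αr (le_trans hα1nn hαle) hαr1
  have hDgt : Cr - C1 < (1 - δ1) * (pr - C1) - (1 - δr) * (pr - Cr) := by nlinarith
  have hDpos : 0 < (1 - δ1) * (pr - C1) - (1 - δr) * (pr - Cr) := by linarith
  have hψ0 : 0 < ψ := by rw [hψ]; exact div_pos (by linarith) hDpos
  have hψ1 : ψ < 1 := by rw [hψ, div_lt_one hDpos]; linarith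
  have hYnn : 0 ≤ (1 - δr) * (Ur - pr) := mul_nonneg (by linarith) (by linarith)
  have hDφpos : 0 < (1 - δ1) * (pr - U1) + (1 - δr) * (Ur - pr) := by linarith
  have hφ0 : 0 < φ := by rw [hφ]; exact div_pos (by linarith) hDφpos
  have hφ1 : φ < 1 := by rw [hφ, div_lt_one hDφpos]; linarith
  have hψmul : ψ * ((1 - δ1) * (pr - C1) - (1 - δr) * (pr - Cr)) = Cr - C1 := by
    rw [hψ]; field_simp
  have hφmul : φ * ((1 - δ1) * (pr - U1) + (1 - δr) * (Ur - pr))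
      = (1 - δr) * (Ur - pr) + CT := by
    rw [hφ]; field_simp
  have hsell : (1 - ψ) * (pr - C1) + ψ * (δ1 * (pr - C1))
      = (1 - ψ) * (pr - Cr) + ψ * (δr * (pr - Cr)) := by
    linear_combination -hψmul
  have hbuy : φ * (δ1 * (U1 - pr)) + (1 - φ) * (δr * (Ur - pr)) - CT
      = φ * (U1 - pr) + (1 - φ) * (Ur - pr) := by
    linear_combination hφmul
  refine ⟨⟨hφ0, hφ1⟩, ⟨hψ0, hψ1⟩, hsell, hbuy, ?_, ?_⟩
  · intro φ' _ _
    exact le_of_eq (by rw [hsell]; ring)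
  · intro ψ' _ _
    exact le_of_eq (by rw [hbuy]; ring)
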